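/- arXiv:2110.06848 — 2 statements merged into one kernel-verified Lean document; each statement's English description precedes it below -/
import Mathlib

section
/- Gradient of the InfoNCE loss with respect to the anchor embedding (Proposition 1, first identity): the function F : E → ℝ defined by F(z) = -log( exp(⟪z, z₂⟫/τ) / ( exp(⟪z, z₂⟫/τ) + ∑_{j} exp(⟪z, v j⟫/τ) ) ) is differentiable at z₁, and its gradient at z₁ equals -(q/τ) • ( z₂ - ∑_{j} ( exp(⟪z₁, v j⟫/τ) / U ) • v j ), where U = ∑_{j} exp(⟪z₁, v j⟫/τ) and q = U / ( exp(⟪z₁, z₂⟫/τ) + U ). -/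
/-!
Since `-log (eˢ / (eˢ + U)) = log (eˢ + U) - s`, the loss is the log-sum-exp of the linear forms
`z ↦ ⟪z, w⟫ / τ` (for `w = z₂` and the `v j`) minus the form for `z₂`. Its gradient is `τ⁻¹` times
the softmax mean of the embeddings minus `τ⁻¹ • z₂`. With `a = exp (⟪z₁, z₂⟫ / τ)` and
`eⱼ = exp (⟪z₁, v j⟫ / τ)`, the softmax weight of a negative is `eⱼ / (a + U) = q · (eⱼ / U)`, which
yields the NPC form `-(q / τ) • (z₂ - ∑ⱼ (eⱼ / U) • v j)`.
-/

open Real RealInnerProductSpace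

section GradientCalculus

variable {E : Type*} [NormedAddCommGroup E] [InnerProductSpace ℝ E] [CompleteSpace E]
  {f g : E → ℝ} {f' g' x : E}

theorem HasDerivAt.comp_hasGradientAt {h : ℝ → ℝ} {h' : ℝ} (hh : HasDerivAt h h' (f x))
    (hf : HasGradientAt f f' x) : HasGradientAt (h ∘ f) (h' • f') x := by
  rw [hasGradientAt_iff_hasFDerivAt] at hf ⊢
  refine (hh.comp_hasFDerivAt x hf).congr_fderiv ?_
  ext y
  simp

theorem HasGradientAt.exp (hf : HasGradientAt f f' x) :
    HasGradientAt (fun z => Real.exp (f z)) (Real.exp (f x) • f') x :=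
  (Real.hasDerivAt_exp (f x)).comp_hasGradientAt hf

theorem HasGradientAt.log (hf : HasGradientAt f f' x) (hx : f x ≠ 0) :
    HasGradientAt (fun z => Real.log (f z)) ((f x)⁻¹ • f') x :=
  (Real.hasDerivAt_log hx).comp_hasGradientAt hf

theorem HasGradientAt.add (hf : HasGradientAt f f' x) (hg : HasGradientAt g g' x) :
    HasGradientAt (fun z => f z + g z) (f' + g') x := by
  rw [hasGradientAt_iff_hasFDerivAt] at hf hg ⊢
  rw [map_add]
  exact hf.add hg

theorem HasGradientAt.sub (hf : HasGradientAt f f' x) (hg : HasGradientAt g g' x) :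
    HasGradientAt (fun z => f z - g z) (f' - g') x := by
  rw [hasGradientAt_iff_hasFDerivAt] at hf hg ⊢
  rw [map_sub]
  exact hf.sub hg

theorem HasGradientAt.sum {ι : Type*} {s : Finset ι} {F : ι → E → ℝ} {F' : ι → E}
    (hF : ∀ i ∈ s, HasGradientAt (F i) (F' i) x) :
    HasGradientAt (fun z => ∑ i ∈ s, F i z) (∑ i ∈ s, F' i) x := by
  simp_rw [hasGradientAt_iff_hasFDerivAt] at hF ⊢
  rw [map_sum]
  exact HasFDerivAt.fun_sum hF

theorem hasGradientAt_inner_div (w : E) (τ : ℝ) :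
    HasGradientAt (fun z => ⟪z, w⟫ / τ) (τ⁻¹ • w) x := by
  rw [hasGradientAt_iff_hasFDerivAt, map_smul]
  refine (((InnerProductSpace.toDual ℝ E w).hasFDerivAt).const_smul τ⁻¹).congr_of_eventuallyEq
    (.of_forall fun z => ?_)
  simp [real_inner_comm, div_eq_inv_mul]

end GradientCalculus

theorem neg_log_exp_div_exp_add {t U : ℝ} (hU : 0 ≤ U) :
    -Real.log (Real.exp t / (Real.exp t + U)) = Real.log (Real.exp t + U) - t := by
  have hpos : 0 < Real.exp t + U := by positivity
  rw [Real.log_div (Real.exp_pos t).ne' hpos.ne', Real.log_exp]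
  ring

theorem inv_smul_add_sum_smul_sub_self {E ι : Type*} [AddCommGroup E] [Module ℝ E]
    [Fintype ι] {a : ℝ} (ha : 0 < a) {e : ι → ℝ} (he : ∀ j, 0 < e j) (z : E) (v : ι → E) :
    (a + ∑ j, e j)⁻¹ • (a • z + ∑ j, e j • v j) - z =
      -((∑ j, e j) / (a + ∑ j, e j)) • (z - ∑ j, (e j / ∑ i, e i) • v j) := by
  set U := ∑ j, e j
  have hU : 0 ≤ U := Finset.sum_nonneg fun j _ => (he j).le
  have hZ : a + U ≠ 0 := by positivity
  have hweights : ∀ j, U / (a + U) * (e j / U) = (a + U)⁻¹ * e j := fun j => by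
    have hU₀ : U ≠ 0 := (lt_of_lt_of_le (he j) (Finset.single_le_sum (fun i _ => (he i).le)
      (Finset.mem_univ j))).ne'
    field_simp
  have hmean : (U / (a + U)) • ∑ j, (e j / U) • v j = (a + U)⁻¹ • ∑ j, e j • v j := by
    simp only [Finset.smul_sum, smul_smul, hweights]
  rw [neg_smul, smul_sub, hmean]
  match_scalars
  · field_simp
    ring
  · ring

theorem infoNCE_gradient_anchor_general
    {E : Type*} [NormedAddCommGroup E] [InnerProductSpace ℝ E] [CompleteSpace E]
    {τ : ℝ} (z₁ z₂ : E) {m : ℕ} (v : Fin m → E) :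
    DifferentiableAt ℝ
      (fun z : E => -Real.log (Real.exp (⟪z, z₂⟫ / τ) /
        (Real.exp (⟪z, z₂⟫ / τ) + ∑ j, Real.exp (⟪z, v j⟫ / τ)))) z₁ ∧
    gradient (fun z : E => -Real.log (Real.exp (⟪z, z₂⟫ / τ) /
        (Real.exp (⟪z, z₂⟫ / τ) + ∑ j, Real.exp (⟪z, v j⟫ / τ)))) z₁ =
      -(((∑ j, Real.exp (⟪z₁, v j⟫ / τ)) /
          (Real.exp (⟪z₁, z₂⟫ / τ) + ∑ j, Real.exp (⟪z₁, v j⟫ / τ))) / τ) •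
        (z₂ - ∑ j, (Real.exp (⟪z₁, v j⟫ / τ) /
          (∑ i, Real.exp (⟪z₁, v i⟫ / τ))) • v j) := by
  set e : Fin m → ℝ := fun j => Real.exp (⟪z₁, v j⟫ / τ)
  set a := Real.exp (⟪z₁, z₂⟫ / τ)
  have hpartition : HasGradientAt
      (fun z => Real.log (Real.exp (⟪z, z₂⟫ / τ) + ∑ j, Real.exp (⟪z, v j⟫ / τ)))
      ((a + ∑ j, e j)⁻¹ • (a • τ⁻¹ • z₂ + ∑ j, e j • τ⁻¹ • v j)) z₁ :=
    ((hasGradientAt_inner_div z₂ τ).exp.add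
      (HasGradientAt.sum fun j _ => (hasGradientAt_inner_div (v j) τ).exp)).log
      (by positivity)
  suffices hloss : HasGradientAt _ (-((∑ j, e j) / (a + ∑ j, e j) / τ) •
      (z₂ - ∑ j, (e j / ∑ i, e i) • v j)) z₁ from ⟨hloss.differentiableAt, hloss.gradient⟩
  simp_rw [neg_log_exp_div_exp_add (Finset.sum_nonneg fun j _ => (Real.exp_pos _).le)]
  convert hpartition.sub (hasGradientAt_inner_div z₂ τ) using 1
  rw [div_eq_inv_mul, ← mul_neg, ← smul_smul,
    ← inv_smul_add_sum_smul_sub_self (a := a) (e := e) (Real.exp_pos _) fun j => Real.exp_pos _]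
  simp only [smul_sub, smul_add, Finset.smul_sum, smul_comm τ⁻¹]

/-- Proposition 1, first identity: gradient of the InfoNCE loss with respect to
the anchor embedding `z₁`. -/
theorem infoNCE_gradient_anchor
    {E : Type*} [NormedAddCommGroup E] [InnerProductSpace ℝ E] [CompleteSpace E]
    {τ : ℝ} (hτ : 0 < τ) (z₁ z₂ : E) {m : ℕ} (hm : 1 ≤ m) (v : Fin m → E) :
    DifferentiableAt ℝ
      (fun z : E => -Real.log (Real.exp (⟪z, z₂⟫ / τ) /
        (Real.exp (⟪z, z₂⟫ / τ) + ∑ j, Real.exp (⟪z, v j⟫ / τ)))) z₁ ∧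
    gradient (fun z : E => -Real.log (Real.exp (⟪z, z₂⟫ / τ) /
        (Real.exp (⟪z, z₂⟫ / τ) + ∑ j, Real.exp (⟪z, v j⟫ / τ)))) z₁ =
      -(((∑ j, Real.exp (⟪z₁, v j⟫ / τ)) /
          (Real.exp (⟪z₁, z₂⟫ / τ) + ∑ j, Real.exp (⟪z₁, v j⟫ / τ))) / τ) •
        (z₂ - ∑ j, (Real.exp (⟪z₁, v j⟫ / τ) /
          (∑ i, Real.exp (⟪z₁, v i⟫ / τ))) • v j) :=
  infoNCE_gradient_anchor_general z₁ z₂ v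
end

section
/- The NPC multiplier tends to 1 as the batch size tends to infinity: for any sequence of batches indexed by m ∈ ℕ, consisting of unit vectors z₁(m), z₂(m) ∈ E and a family v(m) : Fin m → E of unit vectors, the NPC multipliers q(m) = U(m) / ( exp(⟪z₁(m), z₂(m)⟫/τ) + U(m) ), where U(m) = ∑_{j} exp(⟪z₁(m), v(m) j⟫/τ), satisfy q(m) → 1 as m → ∞. Consequently the InfoNCE loss gradient converges to the DCL loss gradient in the infinite-batch-size limit. -/
open Real RealInnerProductSpace Filter

/-! For unit vectors every logit `⟪z₁, ·⟫ / τ` lies in `[-τ⁻¹, τ⁻¹]`. Hence the positive term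
`exp (⟪z₁, z₂⟫ / τ)` stays bounded while the negative sum `U m` is at least `m * exp (-τ⁻¹)`, and
`U / (A + U) = (1 + A / U)⁻¹ → 1`. -/

theorem tendsto_div_add_nhds_one {ι : Type*} {l : Filter ι} {a b : ι → ℝ}
    (ha : IsBoundedUnder (· ≤ ·) l (norm ∘ a)) (hb : Tendsto b l atTop) :
    Tendsto (fun x => b x / (a x + b x)) l (nhds 1) := by
  have hab : Tendsto (fun x => a x * (b x)⁻¹) l (nhds 0) :=
    isBoundedUnder_le_mul_tendsto_zero ha hb.inv_tendsto_atTop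
  have hlim : Tendsto (fun x => (1 + a x * (b x)⁻¹)⁻¹) l (nhds 1) := by
    simpa using ((tendsto_const_nhds (x := (1 : ℝ))).add hab).inv₀ (by norm_num)
  refine hlim.congr' ?_
  filter_upwards [hb.eventually_gt_atTop 0] with x hx
  field_simp
  ring

theorem abs_inner_div_le_inv {E : Type*} [NormedAddCommGroup E] [InnerProductSpace ℝ E]
    {τ : ℝ} (hτ : 0 < τ) {x y : E} (hx : ‖x‖ = 1) (hy : ‖y‖ = 1) :
    |⟪x, y⟫ / τ| ≤ τ⁻¹ := by
  have h := abs_real_inner_le_norm x y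
  rw [hx, hy, mul_one] at h
  rw [abs_div, abs_of_pos hτ, div_eq_mul_inv]
  exact mul_le_of_le_one_left (inv_nonneg.2 hτ.le) h

theorem tendsto_sum_exp_inner_div_atTop {E : Type*} [NormedAddCommGroup E]
    [InnerProductSpace ℝ E] {τ : ℝ} (hτ : 0 < τ) (z : ℕ → E) (v : (m : ℕ) → Fin m → E)
    (hz : ∀ m, ‖z m‖ = 1) (hv : ∀ m, ∀ j : Fin m, ‖v m j‖ = 1) :
    Tendsto (fun m : ℕ => ∑ j, exp (⟪z m, v m j⟫ / τ)) atTop atTop := by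
  have hlower : ∀ m : ℕ, (m : ℝ) * exp (-τ⁻¹) ≤ ∑ j, exp (⟪z m, v m j⟫ / τ) := fun m => by
    simpa using Finset.card_nsmul_le_sum Finset.univ _ _ fun j _ =>
      exp_le_exp.2 (neg_le_of_abs_le (abs_inner_div_le_inv hτ (hz m) (hv m j)))
  exact tendsto_atTop_mono hlower
    (tendsto_natCast_atTop_atTop.atTop_mul_const (exp_pos _))

theorem npc_multiplier_tendsto_one_general
    {E : Type*} [NormedAddCommGroup E] [InnerProductSpace ℝ E]
    {τ : ℝ} (hτ : 0 < τ) (z₁ z₂ : ℕ → E) (v : (m : ℕ) → Fin m → E)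
    (hz₁ : ∀ m, ‖z₁ m‖ = 1) (hz₂ : ∀ m, ‖z₂ m‖ = 1)
    (hv : ∀ m, ∀ j : Fin m, ‖v m j‖ = 1) :
    Tendsto (fun m : ℕ =>
        (∑ j, Real.exp (⟪z₁ m, v m j⟫ / τ)) /
          (Real.exp (⟪z₁ m, z₂ m⟫ / τ) + ∑ j, Real.exp (⟪z₁ m, v m j⟫ / τ)))
      atTop (nhds 1) := by
  have hpos : IsBoundedUnder (· ≤ ·) atTop (norm ∘ fun m => exp (⟪z₁ m, z₂ m⟫ / τ)) :=
    isBoundedUnder_of ⟨exp τ⁻¹, fun m => by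
      simpa [abs_of_pos (exp_pos _)] using
        le_of_abs_le (abs_inner_div_le_inv hτ (hz₁ m) (hz₂ m))⟩
  exact tendsto_div_add_nhds_one hpos (tendsto_sum_exp_inner_div_atTop hτ z₁ v hz₁ hv)

/-- The NPC multiplier tends to `1` as the batch size tends to infinity for
batches of unit vectors. -/
theorem npc_multiplier_tendsto_one
    {E : Type*} [NormedAddCommGroup E] [InnerProductSpace ℝ E] [CompleteSpace E]
    {τ : ℝ} (hτ : 0 < τ) (z₁ z₂ : ℕ → E) (v : (m : ℕ) → Fin m → E)
    (hz₁ : ∀ m, ‖z₁ m‖ = 1) (hz₂ : ∀ m, ‖z₂ m‖ = 1)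
    (hv : ∀ m, ∀ j : Fin m, ‖v m j‖ = 1) :
    Tendsto (fun m : ℕ =>
        (∑ j, Real.exp (⟪z₁ m, v m j⟫ / τ)) /
          (Real.exp (⟪z₁ m, z₂ m⟫ / τ) + ∑ j, Real.exp (⟪z₁ m, v m j⟫ / τ)))
      atTop (nhds 1) :=
  npc_multiplier_tendsto_one_general hτ z₁ z₂ v hz₁ hz₂ hv
end
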